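/- With Y multiplication by x, Z the formal derivative on ℂ[x], H = Y∘Z, G = R(H)∘Z for a fixed polynomial R of degree d, q ∈ ℂ[X] with q(0) = 0 and deg q = l ≥ 1, and P_n^q = e^{q(G)}(x^n) (with the convention P_m^q = 0 for m < 0): the polynomials P_n^q satisfy a finite-term recurrence relation; that is, for every n ∈ ℕ there exist complex constants γ_0(n), …, γ_{ld+l−1}(n), independent of x, such that x·P_n^q = P_{n+1}^q + Σ_{j=0}^{ld+l−1} γ_j(n)·P_{n−j}^q. -/

import Mathlib

/-!
Write `A = q(G)`. Since `A` lowers degrees, `e^A` may be replaced by a truncated exponential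
sum, and `x · e^A = e^A · Σ_r B_r / r!` with `B_0 = Y`, `B_{r+1} = B_r A - A B_r`. Expand operators
as `Σ_k f_k(H) G^k`. Because `G f(H) = f(H + 1) G`, commuting `f(H) G^k` with `A` replaces `f` by
a difference `f(H + i) - f(H)` of lower degree and raises `k` by at most `l`; and `[Y, G^k]`
already has this shape with `deg f < d + 1`. Hence `B_r = 0` for `r ≥ d + 2`, while for
`1 ≤ r ≤ d + 1` only powers `G^k` with `k < (d + 1) l` occur. Each such term maps `x^n` to a
multiple of `x^(n-k)`, and `e^A` maps `x^(n-k)` to `P_(n-k)`.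
-/

open Polynomial Finset

noncomputable section

/-- `E` is the ℂ-algebra of ℂ-linear endomorphisms of `ℂ[x]`. -/
abbrev E := Module.End ℂ (Polynomial ℂ)

/-- `Y`: multiplication by `x`. -/
def Yop : E := LinearMap.mulLeft ℂ (X : Polynomial ℂ)

/-- `Z`: the formal derivative. -/
def Zop : E := Polynomial.derivative

/-- `H = Y ∘ Z`. -/
def Hop : E := Yop * Zop

/-- `G = R(H) ∘ Z`. -/
def Gop (R : Polynomial ℂ) : E := aeval Hop R * Zop

/-- `P_n^q = e^{q(G)}(x^n)`, the exponential series being a finite sum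
(all terms with `j > n` vanish). -/
def Pq (R q : Polynomial ℂ) (n : ℕ) : Polynomial ℂ :=
  ∑ j ∈ range (n + 1), (j.factorial : ℂ)⁻¹ • ((aeval (Gop R) q) ^ j) (X ^ n : Polynomial ℂ)

/-- `P_m^q` extended to integer indices by `P_m^q = 0` for `m < 0`. -/
def Pqz (R q : Polynomial ℂ) (m : ℤ) : Polynomial ℂ :=
  if m < 0 then 0 else Pq R q m.toNat

open scoped Nat

section

variable {𝕜 S : Type*} [Field 𝕜] [CharZero 𝕜] [Ring S] [Algebra 𝕜 S]

def iterComm (a y : S) : ℕ → S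
  | 0 => y
  | r + 1 => iterComm a y r * a - a * iterComm a y r

theorem mul_pow_eq_sum_iterComm (y a : S) (j : ℕ) :
    y * a ^ j = ∑ r ∈ range (j + 1), j.choose r • (a ^ (j - r) * iterComm a y r) := by
  set D := LinearMap.mulRight ℤ a - LinearMap.mulLeft ℤ a
  have hD : ∀ r, (D ^ r) y = iterComm a y r := by
    intro r
    induction r with
    | zero => rfl
    | succ r ih => rw [pow_succ', Module.End.mul_apply, ih]; rfl
  have hcomm : Commute D (LinearMap.mulLeft ℤ a) :=
    ((LinearMap.commute_mulLeft_right a a).sub_right (Commute.refl _)).symm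
  calc y * a ^ j = (LinearMap.mulRight ℤ a ^ j) y := by rw [LinearMap.pow_mulRight]; rfl
    _ = ((D + LinearMap.mulLeft ℤ a) ^ j) y := by rw [sub_add_cancel]
    _ = _ := by
      rw [hcomm.add_pow, LinearMap.sum_apply]
      refine sum_congr rfl fun r _ => ?_
      rw [← nsmul_eq_mul', (hcomm.pow_pow _ _).eq, LinearMap.smul_apply, Module.End.mul_apply,
        LinearMap.pow_mulLeft, LinearMap.mulLeft_apply, hD]

variable (𝕜) in
def expTrunc (a : S) (N : ℕ) : S := ∑ j ∈ range N, (j ! : 𝕜)⁻¹ • a ^ j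

theorem mul_expTrunc (y a : S) (N : ℕ) :
    y * expTrunc 𝕜 a N =
      ∑ r ∈ range N, (r ! : 𝕜)⁻¹ • (expTrunc 𝕜 a (N - r) * iterComm a y r) := by
  have hcoeff : ∀ j r, r ≤ j → (j ! : 𝕜)⁻¹ • j.choose r • (a ^ (j - r) * iterComm a y r) =
      (r ! : 𝕜)⁻¹ • ((j - r) ! : 𝕜)⁻¹ • (a ^ (j - r) * iterComm a y r) := by
    intro j r hrj
    rw [← Nat.cast_smul_eq_nsmul 𝕜, smul_smul, smul_smul, Nat.cast_choose 𝕜 hrj]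
    have : (j ! : 𝕜) ≠ 0 := Nat.cast_ne_zero.2 j.factorial_ne_zero
    field_simp
  simp_rw [expTrunc, mul_sum, mul_smul_comm, mul_pow_eq_sum_iterComm y a, smul_sum, sum_mul,
    smul_sum, smul_mul_assoc]
  rw [← sum_range_diag_flip]
  refine sum_congr rfl fun j _ => sum_congr rfl fun r hr => ?_
  rw [hcoeff j r (by simpa [Nat.lt_succ_iff] using hr)]

end

theorem mul_aeval_sub_aeval_mul_mem {𝕜 S : Type*} [CommRing 𝕜] [Ring S] [Algebra 𝕜 S]
    {M : Submodule 𝕜 S} {t a : S} (q : 𝕜[X])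
    (h : ∀ i ≤ q.natDegree, t * a ^ i - a ^ i * t ∈ M) :
    t * aeval a q - aeval a q * t ∈ M := by
  rw [aeval_eq_sum_range, mul_sum, sum_mul, ← sum_sub_distrib]
  refine sum_mem fun i hi => ?_
  rw [mul_smul_comm, smul_mul_assoc, ← smul_sub]
  exact M.smul_mem _ (h i (Nat.lt_succ_iff.1 (mem_range.1 hi)))

theorem exists_eq_sum_range_of_mem_span {R M : Type*} [Semiring R] [AddCommMonoid M] [Module R M]
    {v : ℕ → M} {K : ℕ} {p : M} (hp : p ∈ Submodule.span R (v '' ↑(range K))) :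
    ∃ γ : ℕ → R, p = ∑ j ∈ range K, γ j • v j := by
  obtain ⟨c, hc, rfl⟩ := Finsupp.mem_span_image_iff_linearCombination R |>.1 hp
  refine ⟨c, ?_⟩
  rw [Finsupp.linearCombination_apply, Finsupp.sum_of_support_subset c
    (by exact_mod_cast (Finsupp.mem_supported R c).1 hc) (fun i a => a • v i)
    (fun _ _ => zero_smul R _)]

theorem Polynomial.degree_taylor_sub_lt {R : Type*} [CommRing R] (f : R[X]) (r : R) :
    (taylor r f - f).degree < f.natDegree := by
  refine (degree_lt_iff_coeff_zero _ _).2 fun m hm => ?_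
  obtain rfl | hm := (show f.natDegree ≤ m by exact_mod_cast hm).eq_or_lt
  · rw [coeff_sub, coeff_taylor_natDegree, leadingCoeff, sub_self]
  · rw [coeff_sub, coeff_eq_zero_of_natDegree_lt hm,
      coeff_eq_zero_of_natDegree_lt ((natDegree_taylor f r).trans_lt hm), sub_self]

theorem Polynomial.degree_taylor_sub_lt_sub_one {R : Type*} [CommRing R] {f : R[X]} {e : ℕ}
    (hf : f.degree < e) (r : R) : (taylor r f - f).degree < (e - 1 : ℕ) := by
  rcases eq_or_ne f 0 with rfl | hf0
  · simp
  · exact (degree_taylor_sub_lt f r).trans_le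
      (by exact_mod_cast Nat.le_sub_one_of_lt ((natDegree_lt_iff_degree_lt hf0).2 hf))

theorem Polynomial.lhom_ext_X_pow {R M : Type*} [Semiring R] [AddCommMonoid M] [Module R M]
    {f g : R[X] →ₗ[R] M} (h : ∀ n : ℕ, f (X ^ n) = g (X ^ n)) : f = g :=
  (basisMonomials R).ext fun n => by
    simpa [coe_basisMonomials, monomial_one_right_eq_X_pow] using h n

lemma Yop_apply (p : ℂ[X]) : Yop p = X * p := rfl

lemma Hop_X_pow (m : ℕ) : Hop (X ^ m) = (m : ℂ) • X ^ m := by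
  change X * derivative (X ^ m) = _
  rcases m with _ | m
  · simp
  · rw [derivative_X_pow, Nat.add_sub_cancel, smul_eq_C_mul]
    push_cast
    ring

lemma aeval_Hop_X_pow (f : ℂ[X]) (m : ℕ) : aeval Hop f (X ^ m) = f.eval (m : ℂ) • X ^ m :=
  Module.End.aeval_apply_of_mem_apply_eq_smul (Hop_X_pow m)

def gWeight (R : ℂ[X]) : ℂ[X] := X * taylor (-1) R

lemma natDegree_gWeight_le (R : ℂ[X]) : (gWeight R).natDegree ≤ R.natDegree + 1 :=
  natDegree_mul_le.trans (by rw [natDegree_X, natDegree_taylor, add_comm])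

lemma eval_gWeight_zero (R : ℂ[X]) : (gWeight R).eval 0 = 0 := by simp [gWeight]

lemma Gop_X_pow (R : ℂ[X]) (m : ℕ) :
    Gop R (X ^ m) = (gWeight R).eval (m : ℂ) • X ^ (m - 1) := by
  rcases m with _ | m
  · simp [Gop, Zop, gWeight]
  · simp only [Gop, Zop, Module.End.mul_apply, derivative_X_pow, ← smul_eq_C_mul, map_smul,
      aeval_Hop_X_pow, smul_smul, gWeight, eval_mul, eval_X, taylor_eval]
    push_cast
    congr 1
    ring_nf

lemma Gop_pow_X_pow_mem_span (R : ℂ[X]) (k m : ℕ) :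
    (Gop R ^ k) (X ^ m) ∈ ℂ ∙ (X ^ (m - k) : ℂ[X]) := by
  induction k with
  | zero => simp
  | succ k ih =>
    obtain ⟨c, hc⟩ := Submodule.mem_span_singleton.1 ih
    rw [pow_succ', Module.End.mul_apply, ← hc, map_smul, Gop_X_pow, smul_smul, Nat.sub_sub]
    exact Submodule.smul_mem _ _ (Submodule.mem_span_singleton_self _)

lemma Gop_pow_X_pow_of_lt (R : ℂ[X]) {k m : ℕ} (h : m < k) : (Gop R ^ k) (X ^ m) = 0 := by
  obtain ⟨c, hc⟩ := Submodule.mem_span_singleton.1 (Gop_pow_X_pow_mem_span R m m)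
  rw [← Nat.sub_add_cancel h, pow_add, pow_succ', Module.End.mul_apply, Module.End.mul_apply, ← hc,
    map_smul, Nat.sub_self, Gop_X_pow, Nat.cast_zero, eval_gWeight_zero, zero_smul, smul_zero,
    map_zero]

lemma Gop_mul_aeval_Hop (R f : ℂ[X]) : Gop R * aeval Hop f = aeval Hop (taylor 1 f) * Gop R := by
  refine lhom_ext_X_pow fun m => ?_
  simp only [Module.End.mul_apply, aeval_Hop_X_pow, map_smul, Gop_X_pow, smul_smul, taylor_eval]
  rcases m with _ | m
  · simp [eval_gWeight_zero]
  · rw [Nat.add_sub_cancel]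
    push_cast
    ring_nf

lemma Gop_pow_mul_aeval_Hop (R f : ℂ[X]) (k : ℕ) :
    Gop R ^ k * aeval Hop f = aeval Hop (taylor (k : ℂ) f) * Gop R ^ k := by
  induction k generalizing f with
  | zero => simp
  | succ k ih =>
    rw [pow_succ, mul_assoc, Gop_mul_aeval_Hop, ← mul_assoc, ih, mul_assoc, ← pow_succ,
      taylor_taylor]
    push_cast
    ring_nf

lemma Gop_mul_Yop (R : ℂ[X]) :
    Gop R * Yop = Yop * Gop R + aeval Hop (taylor 1 (gWeight R) - gWeight R) := by
  refine lhom_ext_X_pow fun m => ?_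
  simp only [Module.End.mul_apply, LinearMap.add_apply, Yop_apply, ← pow_succ', Gop_X_pow,
    map_smul, aeval_Hop_X_pow, eval_sub, taylor_eval, Nat.add_sub_cancel]
  rcases m with _ | m
  · simp [eval_gWeight_zero]
  · rw [Nat.add_sub_cancel, ← add_smul, add_sub_cancel]
    push_cast
    ring_nf

def hgSpan (R : ℂ[X]) (e t : ℕ) : Submodule ℂ E :=
  Submodule.span ℂ {T | ∃ f : ℂ[X], f.degree < e ∧ ∃ k < t, T = aeval Hop f * Gop R ^ k}

section hgSpan

variable {R : ℂ[X]}

lemma aeval_mul_pow_mem_hgSpan {f : ℂ[X]} {e t k : ℕ} (hf : f.degree < e) (hk : k < t) :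
    aeval Hop f * Gop R ^ k ∈ hgSpan R e t :=
  Submodule.subset_span ⟨f, hf, k, hk, rfl⟩

lemma hgSpan_mono {e e' t t' : ℕ} (he : e ≤ e') (ht : t ≤ t') :
    hgSpan R e t ≤ hgSpan R e' t' := by
  refine Submodule.span_le.2 ?_
  rintro _ ⟨f, hf, k, hk, rfl⟩
  exact aeval_mul_pow_mem_hgSpan (hf.trans_le (by exact_mod_cast he)) (hk.trans_le ht)

lemma hgSpan_zero_left (t : ℕ) : hgSpan R 0 t = ⊥ := by
  refine Submodule.span_eq_bot.2 ?_
  rintro _ ⟨f, hf, k, -, rfl⟩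
  obtain rfl : f = 0 := by
    by_contra hf0
    exact (zero_le_degree_iff.2 hf0).not_gt (by exact_mod_cast hf)
  rw [map_zero, zero_mul]

lemma mul_Gop_mem_hgSpan {T : E} {e t : ℕ} (hT : T ∈ hgSpan R e t) :
    T * Gop R ∈ hgSpan R e (t + 1) := by
  refine Submodule.span_le (p := (hgSpan R e (t + 1)).comap (LinearMap.mulRight ℂ (Gop R))).2
    ?_ hT
  rintro _ ⟨f, hf, k, hk, rfl⟩
  rw [SetLike.mem_coe, Submodule.mem_comap, LinearMap.mulRight_apply, mul_assoc, ← pow_succ]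
  exact aeval_mul_pow_mem_hgSpan hf (by omega)

lemma comm_Gop_pow_mem_hgSpan {T : E} {e t : ℕ} (hT : T ∈ hgSpan R e t) (i : ℕ) :
    T * Gop R ^ i - Gop R ^ i * T ∈ hgSpan R (e - 1) (t + i) := by
  refine Submodule.span_le (p := (hgSpan R (e - 1) (t + i)).comap
    (LinearMap.mulRight ℂ (Gop R ^ i) - LinearMap.mulLeft ℂ (Gop R ^ i))).2 ?_ hT
  rintro _ ⟨f, hf, k, hk, rfl⟩
  have hcomm : aeval Hop f * Gop R ^ k * Gop R ^ i - Gop R ^ i * (aeval Hop f * Gop R ^ k) =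
      -(aeval Hop (taylor (i : ℂ) f - f) * Gop R ^ (k + i)) := by
    rw [← mul_assoc, Gop_pow_mul_aeval_Hop, mul_assoc, mul_assoc, ← pow_add, ← pow_add,
      add_comm i k, map_sub, sub_mul, neg_sub]
  rw [SetLike.mem_coe, Submodule.mem_comap, LinearMap.sub_apply, LinearMap.mulRight_apply,
    LinearMap.mulLeft_apply, hcomm]
  exact neg_mem (aeval_mul_pow_mem_hgSpan (degree_taylor_sub_lt_sub_one hf _) (by omega))

lemma comm_aeval_Gop_mem_hgSpan {T : E} {e t : ℕ} (hT : T ∈ hgSpan R e t) (q : ℂ[X]) :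
    T * aeval (Gop R) q - aeval (Gop R) q * T ∈ hgSpan R (e - 1) (t + q.natDegree) :=
  mul_aeval_sub_aeval_mul_mem q fun i hi =>
    hgSpan_mono le_rfl (by omega) (comm_Gop_pow_mem_hgSpan hT i)

lemma Yop_comm_Gop_pow_mem_hgSpan (k : ℕ) :
    Yop * Gop R ^ k - Gop R ^ k * Yop ∈ hgSpan R (R.natDegree + 1) k := by
  induction k with
  | zero => simp
  | succ k ih =>
    have hS : aeval Hop (taylor 1 (gWeight R) - gWeight R) = Gop R * Yop - Yop * Gop R := by
      rw [Gop_mul_Yop]; abel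
    have hcomm : Yop * Gop R ^ (k + 1) - Gop R ^ (k + 1) * Yop =
        (Yop * Gop R ^ k - Gop R ^ k * Yop) * Gop R -
          aeval Hop (taylor (k : ℂ) (taylor 1 (gWeight R) - gWeight R)) * Gop R ^ k := by
      rw [← Gop_pow_mul_aeval_Hop, hS, pow_succ]
      simp only [mul_sub, sub_mul, mul_assoc]
      abel
    rw [hcomm]
    refine sub_mem (mul_Gop_mem_hgSpan ih) (aeval_mul_pow_mem_hgSpan ?_ k.lt_succ_self)
    rw [degree_taylor]
    exact (degree_taylor_sub_lt _ _).trans_le (by exact_mod_cast natDegree_gWeight_le R)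

lemma iterComm_mem_hgSpan (q : ℂ[X]) (r : ℕ) :
    iterComm (aeval (Gop R) q) Yop (r + 1) ∈
      hgSpan R (R.natDegree + 1 - r) ((r + 1) * q.natDegree) := by
  induction r with
  | zero =>
    rw [zero_add, one_mul, Nat.sub_zero]
    exact mul_aeval_sub_aeval_mul_mem q fun i hi =>
      hgSpan_mono le_rfl hi (Yop_comm_Gop_pow_mem_hgSpan i)
  | succ r ih =>
    have := comm_aeval_Gop_mem_hgSpan ih q
    rwa [Nat.sub_sub, ← add_one_mul] at this

lemma iterComm_eq_zero (q : ℂ[X]) {r : ℕ} (hr : R.natDegree + 2 ≤ r) :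
    iterComm (aeval (Gop R) q) Yop r = 0 := by
  obtain ⟨r, rfl⟩ : ∃ s, r = s + 1 := ⟨r - 1, by omega⟩
  have := iterComm_mem_hgSpan (R := R) q r
  rwa [show R.natDegree + 1 - r = 0 by omega, hgSpan_zero_left, Submodule.mem_bot] at this

lemma apply_X_pow_mem_span_of_mem_hgSpan {T : E} {e t : ℕ} (hT : T ∈ hgSpan R e t) (n : ℕ) :
    T (X ^ n) ∈ Submodule.span ℂ ((fun k => (X : ℂ[X]) ^ (n - k)) '' {k | k < t ∧ k ≤ n}) := by
  refine Submodule.span_le (p := (Submodule.span ℂ _).comap (LinearMap.applyₗ (X ^ n))).2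
    ?_ hT
  rintro _ ⟨f, -, k, hk, rfl⟩
  rw [SetLike.mem_coe, Submodule.mem_comap, LinearMap.applyₗ_apply_apply, Module.End.mul_apply]
  by_cases hkn : k ≤ n
  · obtain ⟨c, hc⟩ := Submodule.mem_span_singleton.1 (Gop_pow_X_pow_mem_span R k n)
    rw [← hc, map_smul, aeval_Hop_X_pow, smul_smul]
    exact Submodule.smul_mem _ _ (Submodule.subset_span ⟨k, ⟨hk, hkn⟩, rfl⟩)
  · rw [Gop_pow_X_pow_of_lt R (by omega), map_zero]
    exact zero_mem _

end hgSpan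

lemma aeval_Gop_pow_X_pow_of_lt (R : ℂ[X]) {q : ℂ[X]} (hq0 : q.coeff 0 = 0) {j m : ℕ}
    (h : m < j) : (aeval (Gop R) q ^ j) (X ^ m) = 0 := by
  obtain ⟨p, rfl⟩ := X_dvd_iff.2 hq0
  rw [← map_pow, mul_pow, mul_comm, map_mul, Module.End.mul_apply, aeval_X_pow,
    Gop_pow_X_pow_of_lt R h, map_zero]

lemma expTrunc_apply_X_pow (R : ℂ[X]) {q : ℂ[X]} (hq0 : q.coeff 0 = 0) {N m : ℕ} (h : m < N) :
    expTrunc ℂ (aeval (Gop R) q) N (X ^ m) = Pq R q m := by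
  simp only [expTrunc, Pq, LinearMap.sum_apply, LinearMap.smul_apply]
  refine (sum_subset (range_subset_range.2 h) fun j _ hj => ?_).symm
  rw [aeval_Gop_pow_X_pow_of_lt R hq0 (by simpa using hj), smul_zero]

lemma Pqz_natCast (R q : ℂ[X]) (m : ℕ) : Pqz R q m = Pq R q m := by
  simp [Pqz]

lemma expTrunc_apply_mem_span (R : ℂ[X]) {q : ℂ[X]} (hq0 : q.coeff 0 = 0) {n N t : ℕ}
    (hN : n < N) {p : ℂ[X]}
    (hp : p ∈ Submodule.span ℂ ((fun k => (X : ℂ[X]) ^ (n - k)) '' {k | k < t ∧ k ≤ n})) :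
    expTrunc ℂ (aeval (Gop R) q) N p ∈
      Submodule.span ℂ ((fun k : ℕ => Pqz R q (n - k)) '' ↑(range t)) := by
  have hmap := Submodule.mem_map_of_mem (f := expTrunc ℂ (aeval (Gop R) q) N) hp
  rw [Submodule.map_span] at hmap
  refine Submodule.span_mono ?_ hmap
  rintro _ ⟨_, ⟨k, ⟨hk, hkn⟩, rfl⟩, rfl⟩
  refine ⟨k, by simpa using hk, ?_⟩
  dsimp only
  rw [expTrunc_apply_X_pow R hq0 (by omega), ← Nat.cast_sub hkn, Pqz_natCast]

lemma X_mul_Pq (R : ℂ[X]) {q : ℂ[X]} (hq0 : q.coeff 0 = 0) {n M : ℕ} (hM : n < M) :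
    X * Pq R q n = Pq R q (n + 1) + ∑ r ∈ range M, ((r + 1)! : ℂ)⁻¹ •
      expTrunc ℂ (aeval (Gop R) q) (M - r) (iterComm (aeval (Gop R) q) Yop (r + 1) (X ^ n)) := by
  rw [← expTrunc_apply_X_pow R hq0 (show n < M + 1 by omega), ← Yop_apply,
    ← Module.End.mul_apply, mul_expTrunc, sum_range_succ', LinearMap.add_apply, add_comm]
  congr 1
  · rw [iterComm, LinearMap.smul_apply, Module.End.mul_apply, Yop_apply, ← pow_succ',
      expTrunc_apply_X_pow R hq0 (by omega), Nat.factorial_zero, Nat.cast_one, inv_one, one_smul]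
  · simp only [LinearMap.sum_apply, LinearMap.smul_apply, Module.End.mul_apply,
      Nat.add_sub_add_right]

lemma expTrunc_iterComm_apply_mem_span (R : ℂ[X]) {q : ℂ[X]} (hq0 : q.coeff 0 = 0) (n r : ℕ) :
    expTrunc ℂ (aeval (Gop R) q) (n + R.natDegree + 1 - r)
        (iterComm (aeval (Gop R) q) Yop (r + 1) (X ^ n)) ∈
      Submodule.span ℂ ((fun k : ℕ => Pqz R q (n - k)) ''
        ↑(range (q.natDegree * R.natDegree + q.natDegree))) := by
  rcases lt_or_ge (r + 1) (R.natDegree + 2) with hr | hr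
  · refine expTrunc_apply_mem_span R hq0 (by omega) (apply_X_pow_mem_span_of_mem_hgSpan
      (hgSpan_mono le_rfl ?_ (iterComm_mem_hgSpan q r)) n)
    calc (r + 1) * q.natDegree ≤ (R.natDegree + 1) * q.natDegree := by gcongr; omega
      _ = _ := by ring
  · rw [iterComm_eq_zero q hr, LinearMap.zero_apply, map_zero]
    exact zero_mem _

theorem Pq_recurrence_general (R : Polynomial ℂ) (d : ℕ) (hR : R.natDegree = d)
    (q : Polynomial ℂ) (hq0 : q.eval 0 = 0) (l : ℕ)
    (hql : q.natDegree = l) (n : ℕ) :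
    ∃ γ : ℕ → ℂ,
      X * Pqz R q n = Pqz R q (n + 1)
        + ∑ j ∈ range (l * d + l), γ j • Pqz R q ((n : ℤ) - j) := by
  subst hR hql
  rw [← coeff_zero_eq_eval_zero] at hq0
  obtain ⟨γ, hγ⟩ := exists_eq_sum_range_of_mem_span <|
    sum_mem fun r _ => Submodule.smul_mem _ ((r + 1)! : ℂ)⁻¹
      (expTrunc_iterComm_apply_mem_span R hq0 n r)
  refine ⟨γ, ?_⟩
  rw [Pqz_natCast, X_mul_Pq R hq0 (show n < n + R.natDegree + 1 by omega), hγ]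
  exact_mod_cast congrArg (· + _) (Pqz_natCast R q (n + 1)).symm

/-- Finite-term recurrence:
`x·P_n^q = P_{n+1}^q + Σ_{j=0}^{ld+l−1} γ_j(n)·P_{n−j}^q` for constants `γ_j(n)`. -/
theorem Pq_recurrence (R : Polynomial ℂ) (d : ℕ) (hR : R.natDegree = d)
    (q : Polynomial ℂ) (hq0 : q.eval 0 = 0) (l : ℕ) (hl : 1 ≤ l)
    (hql : q.natDegree = l) (n : ℕ) :
    ∃ γ : ℕ → ℂ,
      X * Pqz R q n = Pqz R q (n + 1)
        + ∑ j ∈ range (l * d + l), γ j • Pqz R q ((n : ℤ) - j) :=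
  Pq_recurrence_general R d hR q hq0 l hql n

end
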